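/- For B ~ Normal(μ, σ²) with σ > 0, E[min(1, e^B)] = Φ(μ/σ) + exp(μ + σ²/2) Φ(−σ − μ/σ), where Φ is the standard normal CDF. -/

import Mathlib

open MeasureTheory ProbabilityTheory Real
open scoped NNReal ENNReal

/-- The standard normal cumulative distribution function. -/
noncomputable def stdNormalCDF (y : ℝ) : ℝ :=
  ((gaussianReal 0 1) (Set.Iic y)).toReal

lemma aux_var_ne (σ : ℝ) (hσ : 0 < σ) : ((σ ^ 2).toNNReal : ℝ≥0) ≠ 0 :=
  (Real.toNNReal_pos.mpr (by positivity)).ne'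

lemma aux_noAtoms (m : ℝ) {v : ℝ≥0} (hv : v ≠ 0) : NoAtoms (gaussianReal m v) :=
  ⟨fun a => gaussianReal_absolutelyContinuous m hv (measure_singleton a)⟩

lemma aux_map (m σ : ℝ) (hσ : 0 < σ) (c : ℝ) (hc : c = σ⁻¹ ∨ c = -σ⁻¹) :
    (gaussianReal m ((σ ^ 2).toNNReal)).map (fun x => c * x + (-(c * m)))
      = gaussianReal 0 1 := by
  have hmap := gaussianReal_map_const_mul (μ := m) (v := (σ ^ 2).toNNReal) c
  have hvar : (.mk (c ^ 2) (sq_nonneg _) * (σ ^ 2).toNNReal : ℝ≥0) = 1 := by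
    have hc2 : c ^ 2 = (σ⁻¹) ^ 2 := by rcases hc with h | h <;> rw [h] <;> ring
    ext
    simp [NNReal.coe_mul, Real.coe_toNNReal _ (sq_nonneg σ), hc2]
    field_simp
  have hcomp : (fun x => c * x + (-(c * m)))
      = (fun y => y + (-(c * m))) ∘ (fun x => c * x) := rfl
  rw [hcomp, ← Measure.map_map (by fun_prop) (by fun_prop), hmap,
    gaussianReal_map_add_const, hvar]
  norm_num

lemma gauss_Iic (m σ a : ℝ) (hσ : 0 < σ) :
    gaussianReal m ((σ ^ 2).toNNReal) (Set.Iic a)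
      = gaussianReal 0 1 (Set.Iic ((a - m) / σ)) := by
  rw [← aux_map m σ hσ σ⁻¹ (Or.inl rfl),
    Measure.map_apply (by fun_prop) measurableSet_Iic]
  congr 1
  ext x
  simp only [Set.mem_preimage, Set.mem_Iic, div_eq_mul_inv]
  have hs : σ⁻¹ * σ = 1 := inv_mul_cancel₀ hσ.ne'
  have hinv : (0:ℝ) < σ⁻¹ := by positivity
  constructor <;> intro h
  · nlinarith [mul_le_mul_of_nonneg_left h hinv.le]
  · nlinarith [mul_le_mul_of_nonneg_right h hσ.le]

lemma gauss_Ioi (m σ a : ℝ) (hσ : 0 < σ) :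
    gaussianReal m ((σ ^ 2).toNNReal) (Set.Ioi a)
      = gaussianReal 0 1 (Set.Iic ((m - a) / σ)) := by
  have : NullSingletonClass (gaussianReal m ((σ ^ 2).toNNReal)) := aux_noAtoms m (aux_var_ne σ hσ)
  rw [measure_congr (Ioi_ae_eq_Ici (a := a) (μ := gaussianReal m ((σ ^ 2).toNNReal))),
    ← aux_map m σ hσ (-σ⁻¹) (Or.inr rfl),
    Measure.map_apply (by fun_prop) measurableSet_Iic]
  congr 1
  ext x
  simp only [Set.mem_preimage, Set.mem_Iic, Set.mem_Ici, div_eq_mul_inv]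
  have hs : σ⁻¹ * σ = 1 := inv_mul_cancel₀ hσ.ne'
  have hinv : (0:ℝ) < σ⁻¹ := by positivity
  constructor <;> intro h
  · nlinarith [mul_le_mul_of_nonneg_left h hinv.le]
  · nlinarith [mul_le_mul_of_nonneg_right h hσ.le]

lemma aux_tilt (m σ x : ℝ) (hσ : 0 < σ) :
    gaussianPDFReal m ((σ ^ 2).toNNReal) x * Real.exp x
      = Real.exp (m + σ ^ 2 / 2) * gaussianPDFReal (m + σ ^ 2) ((σ ^ 2).toNNReal) x := by
  simp only [gaussianPDFReal, Real.coe_toNNReal _ (sq_nonneg σ)]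
  have key : Real.exp (- (x - m) ^ 2 / (2 * σ ^ 2)) * Real.exp x
      = Real.exp (m + σ ^ 2 / 2) * Real.exp (- (x - (m + σ ^ 2)) ^ 2 / (2 * σ ^ 2)) := by
    rw [← Real.exp_add, ← Real.exp_add]
    congr 1
    have h2 : (2 * σ ^ 2) ≠ 0 := by positivity
    field_simp
    ring
  linear_combination (√(2 * π * σ ^ 2))⁻¹ * key

lemma setIntegral_gauss (m : ℝ) {v : ℝ≥0} (hv : v ≠ 0) {s : Set ℝ}
    (hs : MeasurableSet s) (g : ℝ → ℝ) :
    ∫ x in s, g x ∂(gaussianReal m v) = ∫ x in s, gaussianPDFReal m v x * g x := by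
  rw [gaussianReal_of_var_ne_zero _ hv, gaussianPDF_def]
  have hpdf : (fun x => ENNReal.ofReal (gaussianPDFReal m v x))
      = fun x => ((Real.toNNReal (gaussianPDFReal m v x) : ℝ≥0) : ℝ≥0∞) := rfl
  rw [hpdf, restrict_withDensity hs,
    integral_withDensity_eq_integral_smul ((measurable_gaussianPDFReal m v).real_toNNReal) g]
  refine setIntegral_congr_fun hs fun x _ => ?_
  simp [NNReal.smul_def, Real.coe_toNNReal _ (gaussianPDFReal_nonneg m v x)]

/-- For `B ~ Normal(μ, σ²)` with `σ > 0`,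
`E[min(1, e^B)] = Φ(μ/σ) + exp(μ + σ²/2)·Φ(−σ − μ/σ)`. -/
theorem stmt7 (μ σ : ℝ) (hσ : 0 < σ) :
    ∫ x, min 1 (Real.exp x) ∂(gaussianReal μ ((σ ^ 2).toNNReal))
      = stdNormalCDF (μ / σ) + Real.exp (μ + σ ^ 2 / 2) * stdNormalCDF (-σ - μ / σ) := by
  set v : ℝ≥0 := (σ ^ 2).toNNReal with hv_def
  have hv : v ≠ 0 := aux_var_ne σ hσ
  set γ := gaussianReal μ v with hγ
  have hint : Integrable (fun x => min 1 (Real.exp x)) γ := by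
    refine (integrable_const (1:ℝ)).mono ?_ (ae_of_all _ fun x => ?_)
    · exact (measurable_const.min Real.measurable_exp).aestronglyMeasurable
    · rw [Real.norm_eq_abs, abs_of_pos (lt_min one_pos (Real.exp_pos x))]
      simp [min_le_left]
  have hsplit := integral_add_compl (measurableSet_Iic (a := (0:ℝ))) hint (μ := γ)
  rw [Set.compl_Iic] at hsplit
  rw [← hsplit]
  have h2 : ∫ x in Set.Ioi (0:ℝ), min 1 (Real.exp x) ∂γ = stdNormalCDF (μ / σ) := by
    rw [setIntegral_congr_fun measurableSet_Ioi
      (fun x hx => min_eq_left (Real.one_le_exp (le_of_lt hx)))]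
    simp only [setIntegral_const, smul_eq_mul, mul_one, measureReal_def]
    rw [hγ, hv_def, gauss_Ioi μ σ 0 hσ, stdNormalCDF, sub_zero]
  have h1 : ∫ x in Set.Iic (0:ℝ), min 1 (Real.exp x) ∂γ
      = Real.exp (μ + σ ^ 2 / 2) * stdNormalCDF (-σ - μ / σ) := by
    rw [setIntegral_congr_fun measurableSet_Iic
      (fun x hx => min_eq_right (Real.exp_le_one_iff.mpr hx)),
      hγ, setIntegral_gauss μ hv measurableSet_Iic]
    rw [setIntegral_congr_fun measurableSet_Iic
      (fun x _ => aux_tilt μ σ x hσ), integral_const_mul]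
    congr 1
    have happ := gaussianReal_apply_eq_integral (μ + σ ^ 2) hv (Set.Iic (0:ℝ))
    have hnn : 0 ≤ ∫ x in Set.Iic (0:ℝ), gaussianPDFReal (μ + σ ^ 2) v x :=
      integral_nonneg fun x => gaussianPDFReal_nonneg _ _ _
    have := congrArg ENNReal.toReal happ
    rw [ENNReal.toReal_ofReal hnn] at this
    rw [← this, hv_def, gauss_Iic (μ + σ ^ 2) σ 0 hσ, stdNormalCDF]
    congr 2
    field_simp
    ring
  rw [h1, h2]
  ring
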